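/- arXiv:1403.7739 — 4 statements merged into one kernel-verified Lean document; each statement's English description precedes it below -/
import Mathlib

section
/- Let $X_1,\ldots,X_n$ be indicator (i.e. $\{0,1\}$-valued) random variables on a probability space, let $0 < \beta < 1$ and let $k$ be a natural number with $0 < k \le \beta n$. Then $\Pr\left(\sum_{i=1}^n X_i \ge \beta n\right) \le \binom{\lceil\beta n\rceil}{k}^{-1} \sum_{S \subseteq \{1,\ldots,n\}, |S|=k} \Pr\left(\forall i \in S,\ X_i = 1\right)$. -/
open MeasureTheory ProbabilityTheory Finset
open scoped ENNReal

/-!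
Count, for each outcome, the `k`-sets of indices all of whose indicators equal `1`. On the event
`∑ Xᵢ ≥ β n` at least `m = ⌈β n⌉` indicators equal `1`, so this count is at least `m.choose k`,
while its expectation is `∑_S ℙ(∀ i ∈ S, Xᵢ = 1)`. Markov's inequality for the count concludes.
-/

open Classical in
/-- Replacing each `E i` by a measurable hull of the same measure, `A` lies in a superlevel set
of a measurable count, to which Markov's inequality applies. -/
theorem MeasureTheory.natCast_mul_measure_le_sum_measure {Ω ι : Type*} [MeasurableSpace Ω]
    (μ : Measure Ω) (s : Finset ι) (E : ι → Set Ω) (A : Set Ω) (c : ℕ)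
    (hA : ∀ ω ∈ A, c ≤ #{i ∈ s | ω ∈ E i}) :
    (c : ℝ≥0∞) * μ A ≤ ∑ i ∈ s, μ (E i) := by
  set F : ι → Set Ω := fun i => toMeasurable μ (E i)
  set count : Ω → ℝ≥0∞ := fun ω => ∑ i ∈ s, (F i).indicator 1 ω
  have hcount : ∀ ω, count ω = #{i ∈ s | ω ∈ F i} := fun ω => by
    simp only [count, Set.indicator_apply, Pi.one_apply, sum_boole]
  have hA_sub : A ⊆ {ω | (c : ℝ≥0∞) ≤ count ω} := fun ω hω => by
    rw [Set.mem_ofPred_eq, hcount, Nat.cast_le]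
    refine (hA ω hω).trans (card_le_card fun i => ?_)
    simp only [mem_filter]
    exact fun ⟨hi, hωi⟩ => ⟨hi, subset_toMeasurable μ (E i) hωi⟩
  have hF : ∀ i, MeasurableSet (F i) := fun i => measurableSet_toMeasurable μ (E i)
  calc (c : ℝ≥0∞) * μ A ≤ c * μ {ω | (c : ℝ≥0∞) ≤ count ω} := by gcongr
    _ ≤ ∫⁻ ω, count ω ∂μ := mul_meas_ge_le_lintegral
        (Finset.measurable_sum _ fun i _ => measurable_one.indicator (hF i)) _
    _ = ∑ i ∈ s, μ (E i) := by
        rw [lintegral_finsetSum _ fun i _ => measurable_one.indicator (hF i)]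
        exact sum_congr rfl fun i _ => by rw [lintegral_indicator_one (hF i), measure_toMeasurable]

theorem Finset.sum_eq_card_filter_eq_one_of_zero_or_one {ι R : Type*} [AddCommMonoidWithOne R]
    [DecidableEq R] (s : Finset ι) (f : ι → R) (hf : ∀ i, f i = 0 ∨ f i = 1) :
    ∑ i ∈ s, f i = #{i ∈ s | f i = 1} := by
  rw [card_filter, Nat.cast_sum]
  refine sum_congr rfl fun i _ => ?_
  rcases hf i with h | h <;> simp [h]

theorem Finset.choose_le_card_filter_powersetCard_subset {α : Type*} [Fintype α] [DecidableEq α]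
    (T : Finset α) (m k : ℕ) (hm : m ≤ #T) :
    m.choose k ≤ #{S ∈ powersetCard k (univ : Finset α) | S ⊆ T} :=
  calc m.choose k ≤ (#T).choose k := Nat.choose_le_choose k hm
    _ = #(powersetCard k T) := (card_powersetCard k T).symm
    _ ≤ _ := card_le_card fun S hS => by
        obtain ⟨hST, hS⟩ := mem_powersetCard.mp hS
        exact mem_filter.mpr ⟨mem_powersetCard.mpr ⟨subset_univ S, hS⟩, hST⟩

theorem stmt_0_general {Ω : Type*} [MeasureSpace Ω]
    (n : ℕ) (X : Fin n → Ω → ℝ)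
    (h01 : ∀ i ω, X i ω = 0 ∨ X i ω = 1)
    (β : ℝ)
    (k : ℕ) (hk : (k : ℝ) ≤ β * n) :
    ℙ {ω | β * n ≤ ∑ i, X i ω} ≤
      ((Nat.choose ⌈β * n⌉₊ k : ℝ≥0∞))⁻¹ *
        ∑ S ∈ Finset.powersetCard k (Finset.univ : Finset (Fin n)),
          ℙ {ω | ∀ i ∈ S, X i ω = 1} := by
  set m := ⌈β * n⌉₊
  have hkm : k ≤ m := by exact_mod_cast hk.trans (Nat.le_ceil _)
  have hchoose : (m.choose k : ℝ≥0∞) ≠ 0 := by simpa using (Nat.choose_pos hkm).ne'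
  rw [← ENNReal.div_eq_inv_mul,
    ENNReal.le_div_iff_mul_le (.inl hchoose) (.inl (ENNReal.natCast_ne_top _)), mul_comm]
  refine natCast_mul_measure_le_sum_measure ℙ _ _ _ _ fun ω hω => ?_
  let T : Finset (Fin n) := {i | X i ω = 1}
  have hmT : m ≤ #T := Nat.ceil_le.mpr <| by
    rw [← sum_eq_card_filter_eq_one_of_zero_or_one univ (X · ω) (h01 · ω)]
    exact hω
  refine (choose_le_card_filter_powersetCard_subset T m k hmT).trans (card_le_card fun S => ?_)
  simp [T, subset_iff]

theorem stmt_0 {Ω : Type*} [MeasureSpace Ω] [IsProbabilityMeasure (ℙ : Measure Ω)]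
    (n : ℕ) (X : Fin n → Ω → ℝ) (hX : ∀ i, Measurable (X i))
    (h01 : ∀ i ω, X i ω = 0 ∨ X i ω = 1)
    (β : ℝ) (hβ0 : 0 < β) (hβ1 : β < 1)
    (k : ℕ) (hk0 : 0 < k) (hk : (k : ℝ) ≤ β * n) :
    ℙ {ω | β * n ≤ ∑ i, X i ω} ≤
      ((Nat.choose ⌈β * n⌉₊ k : ℝ≥0∞))⁻¹ *
        ∑ S ∈ Finset.powersetCard k (Finset.univ : Finset (Fin n)),
          ℙ {ω | ∀ i ∈ S, X i ω = 1} :=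
  stmt_0_general n X h01 β k hk
end

section
/- Let $X_1,\ldots,X_n$ be $\{0,1\}$-valued random variables and $0 < \alpha < 1$. Suppose that for every subset $S \subseteq \{1,\ldots,n\}$ we have $\Pr(\forall i \in S, X_i = 1) \le \alpha^{|S|}$. Then for every $\beta$ with $\alpha < \beta < 1$, $\Pr\left(\sum_{i=1}^n X_i \ge \beta n\right) \le e^{-D(\beta\|\alpha) n}$. -/
open MeasureTheory ProbabilityTheory Finset
open scoped ENNReal

theorem stmt_2 {Ω : Type*} [MeasureSpace Ω] [IsProbabilityMeasure (ℙ : Measure Ω)]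
    (n : ℕ) (X : Fin n → Ω → ℝ) (hX : ∀ i, Measurable (X i))
    (h01 : ∀ i ω, X i ω = 0 ∨ X i ω = 1)
    (α : ℝ) (hα0 : 0 < α) (hα1 : α < 1)
    (hS : ∀ S : Finset (Fin n),
      ℙ {ω | ∀ i ∈ S, X i ω = 1} ≤ ENNReal.ofReal (α ^ S.card)) :
    ∀ β : ℝ, α < β → β < 1 →
      ℙ {ω | β * n ≤ ∑ i, X i ω} ≤
        ENNReal.ofReal
          (Real.exp (-(β * Real.log (β / α) + (1 - β) * Real.log ((1 - β) / (1 - α))) * n)) := by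
  classical
  intro β hαβ hβ1
  have hβ0 : 0 < β := hα0.trans hαβ
  have h1β : 0 < 1 - β := by linarith
  have h1α : 0 < 1 - α := by linarith
  set q : ℝ := (1 - β) * α / (β * (1 - α)) with hqdef
  have hq0 : 0 < q := by positivity
  have hq1 : q < 1 := by
    rw [hqdef, div_lt_one (by positivity)]
    nlinarith
  have hXnn : ∀ i ω, (0:ℝ) ≤ X i ω := fun i ω => by rcases h01 i ω with h | h <;> simp [h]
  set A : Set Ω := {ω | β * n ≤ ∑ i, X i ω} with hAdef
  set F : Ω → ℝ≥0∞ := fun ω =>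
    ∏ i, (ENNReal.ofReal (1 - q) * ENNReal.ofReal (X i ω) + ENNReal.ofReal q) with hFdef
  have hFmeas : Measurable F := by
    apply Finset.measurable_prod
    intro i _
    exact ((measurable_const.mul (hX i).ennreal_ofReal)).add measurable_const
  -- measurability of the sets
  have hAt_meas : ∀ t : Finset (Fin n), MeasurableSet {ω | ∀ i ∈ t, X i ω = 1} := by
    intro t
    have : {ω | ∀ i ∈ t, X i ω = 1} = ⋂ i ∈ t, X i ⁻¹' {1} := by
      ext ω; simp [Set.mem_iInter]
    rw [this]
    exact MeasurableSet.biInter t.countable_toSet fun i _ => (hX i) (measurableSet_singleton 1)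
  -- product of indicators
  have hInd : ∀ (t : Finset (Fin n)) (ω : Ω),
      (∏ i ∈ t, ENNReal.ofReal (X i ω)) =
        Set.indicator {ω' | ∀ i ∈ t, X i ω' = 1} (1 : Ω → ℝ≥0∞) ω := by
    intro t ω
    by_cases h : ∀ i ∈ t, X i ω = 1
    · rw [Set.indicator_of_mem (show ω ∈ {ω' | ∀ i ∈ t, X i ω' = 1} from h), Pi.one_apply]
      exact Finset.prod_eq_one fun i hi => by simp [h i hi]
    · rw [Set.indicator_of_notMem (show ω ∉ {ω' | ∀ i ∈ t, X i ω' = 1} from h)]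
      push_neg at h
      obtain ⟨i, hi, hne⟩ := h
      have : X i ω = 0 := (h01 i ω).resolve_right hne
      exact Finset.prod_eq_zero hi (by simp [this])
  -- upper bound on the integral
  have hup : ∫⁻ ω, F ω ≤
      (ENNReal.ofReal (1 - q) * ENNReal.ofReal α + ENNReal.ofReal q) ^ n := by
    have hexp : ∀ ω, F ω = ∑ t ∈ (univ : Finset (Fin n)).powerset,
        (ENNReal.ofReal (1 - q)) ^ t.card * (∏ i ∈ t, ENNReal.ofReal (X i ω)) *
          (ENNReal.ofReal q) ^ (n - t.card) := by
      intro ω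
      simp only [hFdef]
      rw [Finset.prod_add]
      refine Finset.sum_congr rfl fun t ht => ?_
      rw [Finset.prod_mul_distrib, Finset.prod_const, Finset.prod_const,
        Finset.card_sdiff_of_subset (Finset.mem_powerset.mp ht), Finset.card_univ, Fintype.card_fin]
    calc ∫⁻ ω, F ω
        = ∑ t ∈ (univ : Finset (Fin n)).powerset,
            (ENNReal.ofReal (1 - q)) ^ t.card * ℙ {ω | ∀ i ∈ t, X i ω = 1} *
              (ENNReal.ofReal q) ^ (n - t.card) := by
          simp_rw [hexp]
          rw [lintegral_finset_sum]
          · refine Finset.sum_congr rfl fun t ht => ?_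
            have hmeasP : Measurable fun ω => ∏ i ∈ t, ENNReal.ofReal (X i ω) := by
              apply Finset.measurable_prod; exact fun i _ => (hX i).ennreal_ofReal
            calc ∫⁻ ω, (ENNReal.ofReal (1 - q) ^ t.card * ∏ i ∈ t, ENNReal.ofReal (X i ω)) *
                  ENNReal.ofReal q ^ (n - t.card)
                = ENNReal.ofReal (1 - q) ^ t.card * ENNReal.ofReal q ^ (n - t.card) *
                    ∫⁻ ω, ∏ i ∈ t, ENNReal.ofReal (X i ω) := by
                  rw [← lintegral_const_mul _ hmeasP]
                  congr 1; funext ω; ring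
              _ = _ := by
                  simp_rw [hInd]
                  rw [lintegral_indicator_one (hAt_meas t)]
                  ring
          · intro t ht
            apply Measurable.mul
            apply Measurable.mul measurable_const
            · apply Finset.measurable_prod; exact fun i _ => (hX i).ennreal_ofReal
            · exact measurable_const
      _ ≤ ∑ t ∈ (univ : Finset (Fin n)).powerset,
            (ENNReal.ofReal (1 - q)) ^ t.card * (ENNReal.ofReal α) ^ t.card *
              (ENNReal.ofReal q) ^ (n - t.card) := by
          refine Finset.sum_le_sum fun t _ => ?_
          have h1 : ℙ {ω | ∀ i ∈ t, X i ω = 1} ≤ (ENNReal.ofReal α) ^ t.card :=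
            (hS t).trans_eq (ENNReal.ofReal_pow hα0.le _)
          exact mul_le_mul_left (mul_le_mul_right h1 _) _
      _ = (ENNReal.ofReal (1 - q) * ENNReal.ofReal α + ENNReal.ofReal q) ^ n := by
          have h := Finset.prod_add (fun _ : Fin n => ENNReal.ofReal (1 - q) * ENNReal.ofReal α)
            (fun _ => ENNReal.ofReal q) univ
          rw [Finset.prod_const, Finset.card_univ, Fintype.card_fin] at h
          rw [h]
          refine Finset.sum_congr rfl fun t ht => ?_
          rw [Finset.prod_const, Finset.prod_const,
            Finset.card_sdiff_of_subset (Finset.mem_powerset.mp ht), Finset.card_univ, Fintype.card_fin,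
            mul_pow]
  -- lower bound on A
  have hlow : ∀ ω ∈ A, (ENNReal.ofReal q) ^ ((1 - β) * n : ℝ) ≤ F ω := by
    intro ω hω
    have hF : F ω = (ENNReal.ofReal q) ^ ((univ.filter fun i => ¬ X i ω = 1).card) := by
      rw [hFdef]
      have : ∀ i : Fin n,
          ENNReal.ofReal (1 - q) * ENNReal.ofReal (X i ω) + ENNReal.ofReal q =
            if X i ω = 1 then 1 else ENNReal.ofReal q := by
        intro i
        rcases h01 i ω with h | h
        · simp [h]
        · rw [if_pos h, h, ENNReal.ofReal_one, mul_one,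
            ← ENNReal.ofReal_add (by linarith) hq0.le]
          norm_num
      simp_rw [this]
      rw [Finset.prod_ite, Finset.prod_const_one, Finset.prod_const, one_mul]
    have hcard : ((univ.filter fun i => ¬ X i ω = 1).card : ℝ) ≤ (1 - β) * n := by
      have hsum : ∑ i, X i ω = ((univ.filter fun i => X i ω = 1).card : ℝ) := by
        rw [← Finset.sum_filter_add_sum_filter_not univ (fun i => X i ω = 1)]
        rw [Finset.sum_congr rfl (fun i hi => (Finset.mem_filter.mp hi).2),
          Finset.sum_const, nsmul_eq_mul, mul_one]
        have : ∀ i ∈ univ.filter fun i => ¬ X i ω = 1, X i ω = 0 := fun i hi =>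
          (h01 i ω).resolve_right (Finset.mem_filter.mp hi).2
        rw [Finset.sum_congr rfl this, Finset.sum_const_zero, add_zero]
      have hcards : (univ.filter fun i => X i ω = 1).card +
          (univ.filter fun i => ¬ X i ω = 1).card = n := by
        rw [Finset.card_filter_add_card_filter_not, Finset.card_univ, Fintype.card_fin]
      have hA' : β * n ≤ ∑ i, X i ω := hω
      have := hsum ▸ hA'
      have hc : ((univ.filter fun i => X i ω = 1).card : ℝ) =
          n - ((univ.filter fun i => ¬ X i ω = 1).card : ℝ) := by
        have := congrArg (fun m : ℕ => (m : ℝ)) hcards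
        push_cast at this
        linarith
      rw [hc] at this
      nlinarith
    rw [hF, ← ENNReal.rpow_natCast]
    apply ENNReal.rpow_le_rpow_of_exponent_ge _ hcard
    exact ENNReal.ofReal_le_one.mpr hq1.le
  -- Markov
  have hA_meas : MeasurableSet A := by
    exact measurableSet_le measurable_const (Finset.measurable_sum univ fun i _ => hX i)
  have hMarkov : (ENNReal.ofReal q) ^ ((1 - β) * n : ℝ) * ℙ A ≤ ∫⁻ ω, F ω := by
    calc (ENNReal.ofReal q) ^ ((1 - β) * n : ℝ) * ℙ A
        = ∫⁻ _ in A, (ENNReal.ofReal q) ^ ((1 - β) * n : ℝ) ∂ℙ := by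
          rw [setLIntegral_const]
      _ ≤ ∫⁻ ω in A, F ω ∂ℙ := setLIntegral_mono hFmeas hlow
      _ ≤ ∫⁻ ω, F ω := setLIntegral_le_lintegral A F
  -- put together
  set s : ℝ := (1 - q) * α + q with hsdef
  have hs0 : 0 < s := by
    have h' : 0 ≤ (1 - q) * α := mul_nonneg (by linarith) hα0.le
    rw [hsdef]; linarith
  have hcoe : ENNReal.ofReal (1 - q) * ENNReal.ofReal α + ENNReal.ofReal q =
      ENNReal.ofReal s := by
    rw [hsdef, ENNReal.ofReal_add (mul_nonneg (by linarith) hα0.le) hq0.le,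
      ENNReal.ofReal_mul (by linarith)]
  have hcrpow : (ENNReal.ofReal q) ^ ((1 - β) * n : ℝ) =
      ENNReal.ofReal (q ^ ((1 - β) * n : ℝ)) := ENNReal.ofReal_rpow_of_pos hq0
  have hqp : (0:ℝ) < q ^ ((1 - β) * n : ℝ) := Real.rpow_pos_of_pos hq0 _
  have hkey : ℙ A ≤ ENNReal.ofReal (s ^ n / q ^ ((1 - β) * n : ℝ)) := by
    rw [ENNReal.ofReal_div_of_pos hqp]
    rw [ENNReal.le_div_iff_mul_le (Or.inl (by simpa using hqp)) (Or.inl ENNReal.ofReal_ne_top)]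
    rw [ENNReal.ofReal_pow hs0.le, ← hcrpow, mul_comm]
    calc (ENNReal.ofReal q) ^ ((1 - β) * n : ℝ) * ℙ A ≤ ∫⁻ ω, F ω := hMarkov
      _ ≤ (ENNReal.ofReal (1 - q) * ENNReal.ofReal α + ENNReal.ofReal q) ^ n := hup
      _ = (ENNReal.ofReal s) ^ n := by rw [hcoe]
  refine hkey.trans (le_of_eq ?_)
  congr 1
  -- real computation
  have hsab : s = α / β := by
    rw [hsdef, hqdef]; field_simp; ring
  rw [hsab]
  have hLpos : (0:ℝ) < (α / β) ^ n / q ^ ((1 - β) * n : ℝ) := by positivity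
  rw [← Real.exp_log hLpos]
  congr 1
  have hlogq : Real.log q =
      Real.log (1 - β) + Real.log α - (Real.log β + Real.log (1 - α)) := by
    rw [hqdef, Real.log_div (by positivity) (by positivity),
      Real.log_mul h1β.ne' hα0.ne', Real.log_mul hβ0.ne' h1α.ne']
  rw [Real.log_div (pow_ne_zero n (by positivity)) hqp.ne', Real.log_pow,
    Real.log_rpow hq0, hlogq,
    Real.log_div hα0.ne' hβ0.ne', Real.log_div hβ0.ne' hα0.ne',
    Real.log_div h1β.ne' h1α.ne']
  ring
end

section
/- Fix integers $n \ge m \ge k \ge 1$. Let $X_1,\ldots,X_n$ be $\{0,1\}$-valued random variables such that with probability 1, either $\sum_{i=1}^n X_i = m$ or $\sum_{i=1}^n X_i < k$. Then $\Pr\left(\sum_{i=1}^n X_i \ge m\right) = \binom{m}{k}^{-1} \sum_{|S|=k} \Pr(\forall i \in S, X_i = 1)$, i.e. the Linial–Luria inequality holds with equality. -/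
/-!
Let `N ω` be the number of indices with `X i ω = 1`. Summing the indicators of the events
`∀ i ∈ S, X i ω = 1` over all `k`-sets `S` counts the `k`-subsets of the random set of ones, so
`∑_S ℙ(∀ i ∈ S, X i = 1) = 𝔼 (N choose k)`. Almost surely `N = m` or `N < k`, and then
`N choose k` is `m choose k` on `{N ≥ m}` and `0` elsewhere.
-/

open MeasureTheory ProbabilityTheory Finset
open scoped ENNReal

lemma Finset.filter_subset_powersetCard_of_subset {α : Type*} [DecidableEq α] {s t : Finset α}
    (hts : t ⊆ s) (k : ℕ) : {S ∈ s.powersetCard k | S ⊆ t} = t.powersetCard k := by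
  ext S
  simp only [mem_filter, mem_powersetCard]
  exact ⟨fun ⟨⟨_, hS⟩, hSt⟩ ↦ ⟨hSt, hS⟩, fun ⟨hSt, hS⟩ ↦ ⟨⟨hSt.trans hts, hS⟩, hSt⟩⟩

lemma Finset.sum_eq_card_filter_eq_one {ι R : Type*} [AddCommMonoidWithOne R] (s : Finset ι)
    {f : ι → R} [DecidablePred (f · = 1)] (hf : ∀ i, f i = 0 ∨ f i = 1) :
    ∑ i ∈ s, f i = #{i ∈ s | f i = 1} := by
  rw [← sum_boole]
  refine sum_congr rfl fun i _ ↦ ?_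
  rcases hf i with h | h <;> simp [h]

lemma card_powersetCard_filter_forall {ι α : Type*} [Fintype ι] {p : ι → α → Prop}
    [∀ i, DecidablePred (p i)] (k : ℕ) (a : α) :
    #{S ∈ powersetCard k (univ : Finset ι) | ∀ i ∈ S, p i a} = (#{i | p i a}).choose k := by
  classical
  have hsubset : ∀ S : Finset ι, (∀ i ∈ S, p i a) ↔ S ⊆ ({i | p i a} : Finset ι) := fun S ↦ by
    simp [subset_iff]
  simp only [hsubset, filter_subset_powersetCard_of_subset (subset_univ _), card_powersetCard]

section

variable {Ω ι : Type*} [MeasurableSpace Ω] [Fintype ι] (μ : Measure Ω)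

lemma sum_measure_forall_mem_powersetCard {p : ι → Ω → Prop} [∀ i, DecidablePred (p i)]
    (hp : ∀ i, MeasurableSet {ω | p i ω}) (k : ℕ) :
    ∑ S ∈ powersetCard k (univ : Finset ι), μ {ω | ∀ i ∈ S, p i ω} =
      ∫⁻ ω, ((#{i | p i ω}).choose k : ℝ≥0∞) ∂μ := by
  have hmeas : ∀ S : Finset ι, MeasurableSet {ω | ∀ i ∈ S, p i ω} := fun S ↦ by
    simpa only [Set.ofPred_forall] using S.measurableSet_biInter fun i _ ↦ hp i
  calc ∑ S ∈ powersetCard k univ, μ {ω | ∀ i ∈ S, p i ω}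
      = ∑ S ∈ powersetCard k univ, ∫⁻ ω, {ω | ∀ i ∈ S, p i ω}.indicator 1 ω ∂μ := by
        simp only [lintegral_indicator_one (hmeas _)]
    _ = ∫⁻ ω, ∑ S ∈ powersetCard k univ, {ω | ∀ i ∈ S, p i ω}.indicator 1 ω ∂μ :=
        (lintegral_finsetSum _ fun S _ ↦ measurable_one.indicator (hmeas S)).symm
    _ = ∫⁻ ω, ((#{i | p i ω}).choose k : ℝ≥0∞) ∂μ := lintegral_congr fun ω ↦ by
        rw [← card_powersetCard_filter_forall, card_filter, Nat.cast_sum]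
        exact sum_congr rfl fun S _ ↦ by simp [Set.indicator_apply]

lemma lintegral_choose_eq_of_ae {N : Ω → ℕ} {m k : ℕ} (hkm : k ≤ m)
    (hN : ∀ᵐ ω ∂μ, N ω = m ∨ N ω < k) (hmeas : MeasurableSet {ω | m ≤ N ω}) :
    ∫⁻ ω, ((N ω).choose k : ℝ≥0∞) ∂μ = m.choose k * μ {ω | m ≤ N ω} := by
  rw [← lintegral_indicator_const hmeas]
  refine lintegral_congr_ae ?_
  filter_upwards [hN] with ω hω
  rcases hω with hω | hω
  · simp [hω]
  · have : ¬ m ≤ N ω := by omega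
    simp [Nat.choose_eq_zero_of_lt hω, this]

end

theorem stmt_7_general {Ω : Type*} [MeasureSpace Ω] [IsProbabilityMeasure (ℙ : Measure Ω)]
    (n m k : ℕ) (hmk : k ≤ m)
    (X : Fin n → Ω → ℝ) (hX : ∀ i, Measurable (X i))
    (h01 : ∀ i ω, X i ω = 0 ∨ X i ω = 1)
    (hsum : ℙ {ω | (∑ i, X i ω) = m ∨ (∑ i, X i ω) < k} = 1) :
    ℙ {ω | (m : ℝ) ≤ ∑ i, X i ω} =
      ((Nat.choose m k : ℝ≥0∞))⁻¹ *
        ∑ S ∈ Finset.powersetCard k (Finset.univ : Finset (Fin n)),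
          ℙ {ω | ∀ i ∈ S, X i ω = 1} := by
  classical
  let N : Ω → ℕ := fun ω ↦ #{i | X i ω = 1}
  have hsumN : ∀ ω, ∑ i, X i ω = N ω := fun ω ↦ sum_eq_card_filter_eq_one _ (h01 · ω)
  have hmeas : Measurable fun ω ↦ ∑ i, X i ω := Finset.measurable_sum _ fun i _ ↦ hX i
  have hN : ∀ᵐ ω, N ω = m ∨ N ω < k := by
    have hG : MeasurableSet {ω | (∑ i, X i ω) = m ∨ (∑ i, X i ω) < k} :=
      (hmeas (measurableSet_singleton _)).union (hmeas measurableSet_Iio)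
    filter_upwards [(mem_ae_iff_prob_eq_one hG).2 hsum] with ω hω
    simpa only [hsumN, Nat.cast_inj, Nat.cast_lt] using hω
  have hset : {ω | m ≤ N ω} = {ω | (m : ℝ) ≤ ∑ i, X i ω} := by
    simp only [hsumN, Nat.cast_le]
  rw [sum_measure_forall_mem_powersetCard (p := fun i ω ↦ X i ω = 1) _
      (fun i ↦ hX i (measurableSet_singleton 1)),
    lintegral_choose_eq_of_ae _ hmk hN (hset ▸ measurableSet_le measurable_const hmeas), hset,
    ← mul_assoc, ENNReal.inv_mul_cancel (by exact_mod_cast (Nat.choose_pos hmk).ne')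
    (ENNReal.natCast_ne_top _), one_mul]

theorem stmt_7 {Ω : Type*} [MeasureSpace Ω] [IsProbabilityMeasure (ℙ : Measure Ω)]
    (n m k : ℕ) (hnm : m ≤ n) (hmk : k ≤ m) (hk : 1 ≤ k)
    (X : Fin n → Ω → ℝ) (hX : ∀ i, Measurable (X i))
    (h01 : ∀ i ω, X i ω = 0 ∨ X i ω = 1)
    (hsum : ℙ {ω | (∑ i, X i ω) = m ∨ (∑ i, X i ω) < k} = 1) :
    ℙ {ω | (m : ℝ) ≤ ∑ i, X i ω} =
      ((Nat.choose m k : ℝ≥0∞))⁻¹ *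
        ∑ S ∈ Finset.powersetCard k (Finset.univ : Finset (Fin n)),
          ℙ {ω | ∀ i ∈ S, X i ω = 1} :=
  stmt_7_general n m k hmk X hX h01 hsum
end

section
/- Fix integers $n \ge m \ge k \ge 1$ and $\{0,1\}$-valued random variables $X_1,\ldots,X_n$. If $\Pr\left(\sum_{i=1}^n X_i \ge m\right) = \binom{m}{k}^{-1} \sum_{|S|=k} \Pr(\forall i \in S, X_i = 1)$, then $\Pr\left(\sum_{i=1}^n X_i = m \text{ or } \sum_{i=1}^n X_i < k\right) = 1$. -/
open MeasureTheory ProbabilityTheory Finset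
open scoped ENNReal

theorem stmt_8 {Ω : Type*} [MeasureSpace Ω] [IsProbabilityMeasure (ℙ : Measure Ω)]
    (n m k : ℕ) (hnm : m ≤ n) (hmk : k ≤ m) (hk : 1 ≤ k)
    (X : Fin n → Ω → ℝ) (hX : ∀ i, Measurable (X i))
    (h01 : ∀ i ω, X i ω = 0 ∨ X i ω = 1)
    (heq : ℙ {ω | (m : ℝ) ≤ ∑ i, X i ω} =
      ((Nat.choose m k : ℝ≥0∞))⁻¹ *
        ∑ S ∈ Finset.powersetCard k (Finset.univ : Finset (Fin n)),
          ℙ {ω | ∀ i ∈ S, X i ω = 1}) :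
    ℙ {ω | (∑ i, X i ω) = m ∨ (∑ i, X i ω) < k} = 1 := by
  classical
  set N : Ω → ℕ := fun ω => (Finset.univ.filter (fun i => X i ω = 1)).card with hNdef
  have hNmeas : Measurable N := by
    have : N = fun ω => ∑ i : Fin n, if X i ω = 1 then 1 else 0 := by
      funext ω
      rw [hNdef]
      exact Finset.card_filter _ _
    rw [this]
    exact Finset.measurable_sum _ fun i _ =>
      Measurable.ite ((hX i) (measurableSet_singleton 1)) measurable_const measurable_const
  have hsum : ∀ ω, ∑ i, X i ω = (N ω : ℝ) := by
    intro ω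
    have : ∀ i : Fin n, X i ω = if X i ω = 1 then (1 : ℝ) else 0 := by
      intro i
      rcases h01 i ω with h | h <;> simp [h]
    calc ∑ i, X i ω = ∑ i : Fin n, if X i ω = 1 then (1 : ℝ) else 0 :=
          Finset.sum_congr rfl fun i _ => this i
      _ = ((Finset.univ.filter (fun i => X i ω = 1)).card : ℝ) := by
          rw [Finset.card_filter]; push_cast; simp
      _ = (N ω : ℝ) := rfl
  have hmeasS : ∀ S : Finset (Fin n), MeasurableSet {ω | ∀ i ∈ S, X i ω = 1} := by
    intro S
    have : {ω | ∀ i ∈ S, X i ω = 1} = ⋂ i ∈ S, (X i) ⁻¹' {1} := by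
      ext ω; simp [Set.mem_iInter]
    rw [this]
    exact MeasurableSet.biInter (S.countable_toSet) fun i _ =>
      (hX i) (measurableSet_singleton 1)
  -- key 1 : sum of probabilities = lintegral of choose (N ω) k
  have key1 : ∑ S ∈ Finset.powersetCard k (Finset.univ : Finset (Fin n)),
      ℙ {ω | ∀ i ∈ S, X i ω = 1}
      = ∫⁻ ω, ((N ω).choose k : ℝ≥0∞) ∂ℙ := by
    have h1 : ∀ S ∈ Finset.powersetCard k (Finset.univ : Finset (Fin n)),
        ℙ {ω | ∀ i ∈ S, X i ω = 1}
          = ∫⁻ ω, Set.indicator {ω | ∀ i ∈ S, X i ω = 1} 1 ω ∂ℙ := by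
      intro S _
      rw [lintegral_indicator_one (hmeasS S)]
    rw [Finset.sum_congr rfl h1, ← lintegral_finset_sum]
    · apply lintegral_congr
      intro ω
      have : ∀ S : Finset (Fin n),
          Set.indicator {ω | ∀ i ∈ S, X i ω = 1} (1 : Ω → ℝ≥0∞) ω
            = if S ⊆ Finset.univ.filter (fun i => X i ω = 1) then 1 else 0 := by
        intro S
        have hiff : (∀ i ∈ S, X i ω = 1) ↔ S ⊆ Finset.univ.filter (fun i => X i ω = 1) := by
          constructor
          · intro h i hi; exact Finset.mem_filter.mpr ⟨Finset.mem_univ i, h i hi⟩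
          · intro h i hi; exact (Finset.mem_filter.mp (h hi)).2
        simp [Set.indicator_apply, Set.mem_setOf_eq, hiff]
      rw [Finset.sum_congr rfl fun S _ => this S, Finset.sum_boole]
      have hfe : (Finset.powersetCard k (Finset.univ : Finset (Fin n))).filter
          (fun S => S ⊆ Finset.univ.filter (fun i => X i ω = 1))
          = Finset.powersetCard k (Finset.univ.filter (fun i => X i ω = 1)) := by
        ext S
        simp only [Finset.mem_filter, Finset.mem_powersetCard, Finset.subset_univ, true_and]
        tauto
      rw [hfe, Finset.card_powersetCard]
    · intro S _
      exact (measurable_const.indicator (hmeasS S))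
  -- key 2 : the probability of the event as a lintegral
  have hAset : {ω | (m : ℝ) ≤ ∑ i, X i ω} = {ω | m ≤ N ω} := by
    ext ω; simp only [Set.mem_setOf_eq, hsum ω, Nat.cast_le]
  have hAmeas : MeasurableSet {ω | m ≤ N ω} :=
    hNmeas (measurableSet_Ici (a := m))
  set c : ℝ≥0∞ := (Nat.choose m k : ℝ≥0∞) with hc
  have hc0 : c ≠ 0 := by
    simp only [hc, ne_eq, Nat.cast_eq_zero]
    exact (Nat.choose_pos hmk).ne'
  have hctop : c ≠ ∞ := by simp [hc]
  set g : Ω → ℝ≥0∞ := fun ω => c * Set.indicator {ω | m ≤ N ω} 1 ω with hg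
  have hgmeas : Measurable g :=
    (measurable_const.indicator hAmeas).const_mul c
  have hfmeas : Measurable fun ω => ((N ω).choose k : ℝ≥0∞) :=
    (measurable_from_nat (f := fun j : ℕ => ((j.choose k : ℝ≥0∞)))).comp hNmeas
  -- g ≤ f pointwise
  have hgle : ∀ ω, g ω ≤ ((N ω).choose k : ℝ≥0∞) := by
    intro ω
    by_cases h : m ≤ N ω
    · rw [hg]
      simp only [Set.indicator_of_mem (show ω ∈ {ω | m ≤ N ω} from h), Pi.one_apply, mul_one]
      exact_mod_cast Nat.cast_le.mpr (Nat.choose_le_choose k h)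
    · rw [hg]
      simp [Set.indicator_of_notMem (show ω ∉ {ω | m ≤ N ω} from h)]
  -- integrals agree
  have hint : ∫⁻ ω, ((N ω).choose k : ℝ≥0∞) ∂ℙ = ∫⁻ ω, g ω ∂ℙ := by
    have h2 : ∫⁻ ω, g ω ∂ℙ = c * ℙ {ω | m ≤ N ω} := by
      rw [hg, lintegral_const_mul _ (measurable_one.indicator hAmeas),
        lintegral_indicator_one hAmeas]
    rw [h2, ← hAset, heq, key1, ← mul_assoc, ENNReal.mul_inv_cancel hc0 hctop, one_mul]
  have hgfin : ∫⁻ ω, g ω ∂ℙ ≠ ∞ := by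
    have : ∫⁻ ω, g ω ∂ℙ ≤ ∫⁻ _ : Ω, c ∂ℙ := by
      apply lintegral_mono
      intro ω
      rw [hg]
      by_cases h : ω ∈ {ω | m ≤ N ω} <;>
        simp [Set.indicator_of_mem, Set.indicator_of_notMem, h]
    refine ne_top_of_le_ne_top ?_ this
    simp [lintegral_const, hctop]
  -- deduce a.e. equality
  have hae : ∀ᵐ ω ∂ℙ, ((N ω).choose k : ℝ≥0∞) = g ω := by
    have hsub : ∫⁻ ω, (((N ω).choose k : ℝ≥0∞) - g ω) ∂ℙ = 0 := by
      rw [lintegral_sub hgmeas hgfin (Filter.Eventually.of_forall hgle), hint, tsub_self]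
    have := (lintegral_eq_zero_iff (hfmeas.sub hgmeas)).mp hsub
    filter_upwards [this] with ω hω
    have hle : ((N ω).choose k : ℝ≥0∞) ≤ g ω := by
      have : ((N ω).choose k : ℝ≥0∞) - g ω = 0 := hω
      exact tsub_eq_zero_iff_le.mp this
    exact le_antisymm hle (hgle ω)
  -- conclude
  have hae2 : ∀ᵐ ω ∂ℙ, N ω = m ∨ N ω < k := by
    filter_upwards [hae] with ω hω
    by_cases h : m ≤ N ω
    · left
      rw [hg] at hω
      simp only [Set.indicator_of_mem (show ω ∈ {ω | m ≤ N ω} from h), Pi.one_apply,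
        mul_one, hc] at hω
      have heqn : (N ω).choose k = m.choose k := by exact_mod_cast hω
      by_contra hne
      have hlt : m < N ω := lt_of_le_of_ne h (Ne.symm hne)
      have h1 : m.choose k < (m + 1).choose k := by
        obtain ⟨k', rfl⟩ : ∃ k', k = k' + 1 := ⟨k - 1, (Nat.succ_pred_eq_of_pos hk).symm⟩
        rw [Nat.choose_succ_succ']
        have : 0 < m.choose k' := Nat.choose_pos (le_trans (Nat.le_succ k') hmk)
        omega
      have h2 : (m + 1).choose k ≤ (N ω).choose k := Nat.choose_le_choose k hlt
      omega
    · right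
      rw [hg] at hω
      simp only [Set.indicator_of_notMem (show ω ∉ {ω | m ≤ N ω} from h), mul_zero] at hω
      have : (N ω).choose k = 0 := by exact_mod_cast hω
      exact Nat.choose_eq_zero_iff.mp this
  have hset : {ω | (∑ i, X i ω) = m ∨ (∑ i, X i ω) < k} = {ω | N ω = m ∨ N ω < k} := by
    ext ω
    simp only [Set.mem_setOf_eq, hsum ω, Nat.cast_inj, Nat.cast_lt]
  rw [hset]
  have hms : MeasurableSet {ω | N ω = m ∨ N ω < k} := by
    have : {ω | N ω = m ∨ N ω < k} = N ⁻¹' ({m} ∪ Set.Iio k) := by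
      ext ω; simp [Set.mem_setOf_eq, or_comm]
    rw [this]
    exact hNmeas (MeasurableSet.union (measurableSet_singleton m) measurableSet_Iio)
  rw [← prob_compl_eq_zero_iff hms, Set.compl_setOf]
  exact ae_iff.mp hae2
end
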